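/- arXiv:2212.09861 — 7 statements merged into one kernel-verified Lean document; each statement's English description precedes it below -/
import Mathlib

section
/- Let G be a finite simple graph on n vertices with minimum degree δ, and let k ≥ 1. Then the k-L-Grundy domination number of G satisfies γ_gr^{L,k}(G) ≤ n − δ + k. -/
/-- A sequence `S` of distinct vertices is a generalized `k`-Grundy sequence with respect to
neighborhood assignments `N₁` (where the footprinted vertex must lie relative to the new
vertex) and `N₂` (the neighborhoods of earlier vertices that must contain the footprinted
vertex fewer than `k` times): for each position `i` there is a vertex `u ∈ N₁ (S i)` that
belongs to `N₂ w` for fewer than `k` of the vertices `w` preceding position `i`. -/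
def IsGrundySeq {V : Type*} (k : ℕ) (N₁ N₂ : V → Set V) (S : List V) : Prop :=
  S.Nodup ∧ ∀ (i : ℕ) (hi : i < S.length),
    ∃ u ∈ N₁ (S.get ⟨i, hi⟩), {w | w ∈ S.take i ∧ u ∈ N₂ w}.ncard < k

/-- The length of a longest generalized `k`-Grundy sequence. -/
noncomputable def grundyVal {V : Type*} (k : ℕ) (N₁ N₂ : V → Set V) : ℕ :=
  sSup {m | ∃ S : List V, IsGrundySeq k N₁ N₂ S ∧ S.length = m}

/-- The closed neighborhood `N[v]` of a vertex. -/
def closedNbhd {V : Type*} (G : SimpleGraph V) (v : V) : Set V :=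
  insert v (G.neighborSet v)

/-- The `k`-Grundy domination number `γ_gr^k(G)`. -/
noncomputable def kGrundy {V : Type*} (G : SimpleGraph V) (k : ℕ) : ℕ :=
  grundyVal k (closedNbhd G) (closedNbhd G)

/-- The `k`-`L`-Grundy domination number `γ_gr^{L,k}(G)`. -/
noncomputable def kLGrundy {V : Type*} (G : SimpleGraph V) (k : ℕ) : ℕ :=
  grundyVal k (closedNbhd G) G.neighborSet

/-- The `k`-`Z`-Grundy domination number `γ_gr^{Z,k}(G)`. -/
noncomputable def kZGrundy {V : Type*} (G : SimpleGraph V) (k : ℕ) : ℕ :=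
  grundyVal k G.neighborSet (closedNbhd G)

/-- The `k`-`t`-Grundy domination number `γ_gr^{t,k}(G)`. -/
noncomputable def ktGrundy {V : Type*} (G : SimpleGraph V) (k : ℕ) : ℕ :=
  grundyVal k G.neighborSet G.neighborSet

/-
The footprint `u` of the last vertex of a `k`-L-sequence `S` is an open neighbour of fewer
than `k` earlier vertices, so at most `k` vertices of `S` are adjacent to `u` (the last vertex
itself possibly being one of them). The remaining `deg u - k ≥ δ - k` neighbours of `u` lie
outside `S`, whence `|S| ≤ n - δ + k`.
-/

theorem IsGrundySeq.exists_ncard_le {V : Type*} {k : ℕ} {N₁ N₂ : V → Set V} {S : List V}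
    (hS : IsGrundySeq k N₁ N₂ S) (hne : S ≠ []) :
    ∃ u, {w | w ∈ S ∧ u ∈ N₂ w}.ncard ≤ k := by
  have hlast : S.length - 1 < S.length := by
    have := List.length_pos_iff.mpr hne
    omega
  obtain ⟨u, -, hu⟩ := hS.2 (S.length - 1) hlast
  refine ⟨u, ?_⟩
  have hsplit : S = S.take (S.length - 1) ++ [S.getLast hne] := by
    rw [← List.dropLast_eq_take, List.dropLast_append_getLast]
  have hsub : {w | w ∈ S ∧ u ∈ N₂ w} ⊆
      insert (S.getLast hne) {w | w ∈ S.take (S.length - 1) ∧ u ∈ N₂ w} := by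
    rintro w ⟨hw, huw⟩
    rw [hsplit, List.mem_append, List.mem_singleton] at hw
    rcases hw with hw | rfl
    · exact Set.mem_insert_of_mem _ ⟨hw, huw⟩
    · exact Set.mem_insert _ _
  have hfin : (insert (S.getLast hne) {w | w ∈ S.take (S.length - 1) ∧ u ∈ N₂ w}).Finite :=
    (S.finite_toSet.subset fun w hw => List.mem_of_mem_take hw.1).insert _
  calc {w | w ∈ S ∧ u ∈ N₂ w}.ncard
      ≤ (insert (S.getLast hne) {w | w ∈ S.take (S.length - 1) ∧ u ∈ N₂ w}).ncard :=
        Set.ncard_le_ncard hsub hfin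
    _ ≤ {w | w ∈ S.take (S.length - 1) ∧ u ∈ N₂ w}.ncard + 1 := Set.ncard_insert_le _ _
    _ ≤ k := hu

theorem SimpleGraph.card_add_degree_le {V : Type*} [Fintype V] [DecidableEq V]
    (G : SimpleGraph V) [DecidableRel G.Adj] (s : Finset V) (u : V) :
    s.card + G.degree u ≤ Fintype.card V + (G.neighborFinset u ∩ s).card := by
  have hsplit := Finset.card_sdiff_add_card_inter (G.neighborFinset u) s
  have hunion : s.card + (G.neighborFinset u \ s).card ≤ Fintype.card V := by
    rw [← Finset.card_union_of_disjoint Finset.sdiff_disjoint.symm]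
    exact Finset.card_le_univ _
  rw [← G.card_neighborFinset_eq_degree]
  omega

theorem kLGrundy_le_card_sub_minDegree_add_k_general {V : Type*} [Fintype V]
    (G : SimpleGraph V) [DecidableRel G.Adj] (k : ℕ) :
    kLGrundy G k ≤ Fintype.card V - G.minDegree + k := by
  classical
  refine csSup_le' ?_
  rintro _ ⟨S, hS, rfl⟩
  rcases eq_or_ne S [] with rfl | hne
  · simp
  obtain ⟨u, hu⟩ := hS.exists_ncard_le hne
  have hnbrs : {w | w ∈ S ∧ u ∈ G.neighborSet w} = ↑(G.neighborFinset u ∩ S.toFinset) := by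
    ext w
    simp [G.adj_comm u w, and_comm]
  rw [hnbrs, Set.ncard_coe_finset] at hu
  have hbound := G.card_add_degree_le S.toFinset u
  rw [List.toFinset_card_of_nodup hS.1] at hbound
  have hmin := G.minDegree_le_degree u
  omega

/-- The `k`-`L`-Grundy domination number of a graph on `n` vertices with minimum degree `δ`
is at most `n - δ + k`. -/
theorem kLGrundy_le_card_sub_minDegree_add_k {V : Type*} [Fintype V] [Nonempty V]
    (G : SimpleGraph V) [DecidableRel G.Adj] (k : ℕ) (hk : 1 ≤ k) :
    kLGrundy G k ≤ Fintype.card V - G.minDegree + k :=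
  kLGrundy_le_card_sub_minDegree_add_k_general G k
end

section
/- Let G be a finite simple graph on n vertices with minimum degree δ, and let k ≥ 1. Then γ_gr^{t,k}(G) ≤ n − δ + k, and γ_gr^{Z,k}(G) ≤ γ_gr^k(G) ≤ n − δ + k − 1. -/
/-!
If `u` is the vertex footprinted by the last vertex `v` of a sequence `S`, then `u ∈ N₂ w` for at
most `k` vertices `w` of `S`: fewer than `k` before `v`, plus `v` itself. When `N₂` is symmetric
this says `|S ∩ N₂ u| ≤ k`, so inclusion–exclusion in `V` gives `|S| + |N₂ u| ≤ n + k`, with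
`|N(u)| ≥ δ` and `|N[u]| ≥ δ + 1`. The middle inequality holds because `N(v) ⊆ N[v]` only
weakens the footprint condition.
-/

namespace IsGrundySeq

variable {V : Type*} {k : ℕ} {N₁ N₂ : V → Set V} {S : List V}

theorem nil : IsGrundySeq k N₁ N₂ ([] : List V) :=
  ⟨List.nodup_nil, fun _ hi => absurd hi (Nat.not_lt_zero _)⟩

theorem mono_left {N₁' : V → Set V} (hN : ∀ v, N₁ v ⊆ N₁' v) (hS : IsGrundySeq k N₁ N₂ S) :
    IsGrundySeq k N₁' N₂ S := by
  refine ⟨hS.1, fun i hi => ?_⟩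
  obtain ⟨u, hu, hcard⟩ := hS.2 i hi
  exact ⟨u, hN _ hu, hcard⟩

theorem exists_ncard_mem_le (hS : IsGrundySeq k N₁ N₂ S) (hne : S ≠ []) :
    ∃ u, {w | w ∈ S ∧ u ∈ N₂ w}.ncard ≤ k := by
  have hlast : S.length - 1 < S.length := by
    have := List.length_pos_iff.mpr hne
    omega
  obtain ⟨u, -, hcard⟩ := hS.2 _ hlast
  refine ⟨u, ?_⟩
  have hsub : {w | w ∈ S ∧ u ∈ N₂ w} ⊆
      {w | w ∈ S.take (S.length - 1) ∧ u ∈ N₂ w} ∪ {S.getLast hne} := by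
    rintro w ⟨hw, hu⟩
    rw [← List.dropLast_append_getLast hne, List.mem_append, List.mem_singleton] at hw
    rw [← List.dropLast_eq_take]
    exact hw.imp (fun h => ⟨h, hu⟩) id
  calc {w | w ∈ S ∧ u ∈ N₂ w}.ncard
      ≤ {w | w ∈ S.take (S.length - 1) ∧ u ∈ N₂ w}.ncard + ({S.getLast hne} : Set V).ncard :=
        (Set.ncard_le_ncard hsub (((S.take _).finite_toSet.subset fun _ hw => hw.1).union
          (Set.finite_singleton _))).trans (Set.ncard_union_le _ _)
    _ ≤ k := by rw [Set.ncard_singleton]; omega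

theorem length_add_le [Fintype V] (hS : IsGrundySeq k N₁ N₂ S) (hne : S ≠ []) {d : ℕ}
    (hd : ∀ u, d ≤ (N₂ u).ncard) (hsymm : ∀ u w, w ∈ N₂ u → u ∈ N₂ w) :
    S.length + d ≤ Fintype.card V + k := by
  obtain ⟨u, hu⟩ := hS.exists_ncard_mem_le hne
  have hinter : {w | w ∈ S} ∩ N₂ u ⊆ {w | w ∈ S ∧ u ∈ N₂ w} :=
    fun w ⟨hw, hwu⟩ => ⟨hw, hsymm u w hwu⟩
  have hS_card : {w | w ∈ S}.ncard = S.length := by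
    classical
    rw [← List.coe_toFinset, Set.ncard_coe_finset, List.toFinset_card_of_nodup hS.1]
  have hunion : ({w | w ∈ S} ∪ N₂ u).ncard ≤ Fintype.card V := by
    rw [← Nat.card_eq_fintype_card, ← Set.ncard_univ]
    exact Set.ncard_le_ncard (Set.subset_univ _)
  have hincl_excl := Set.ncard_union_add_ncard_inter {w | w ∈ S} (N₂ u)
  have hinter_card := Set.ncard_le_ncard hinter (Set.toFinite _)
  linarith [hd u]

end IsGrundySeq

theorem grundyVal_le_of_forall {V : Type*} {k : ℕ} {N₁ N₂ : V → Set V} {b : ℕ}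
    (h : ∀ S, IsGrundySeq k N₁ N₂ S → S ≠ [] → S.length ≤ b) : grundyVal k N₁ N₂ ≤ b := by
  refine csSup_le ⟨0, [], IsGrundySeq.nil, rfl⟩ ?_
  rintro m ⟨S, hS, rfl⟩
  rcases eq_or_ne S [] with rfl | hne
  · exact Nat.zero_le b
  · exact h S hS hne

theorem grundyVal_mono_left {V : Type*} [Finite V] {k : ℕ} {N₁ N₁' N₂ : V → Set V}
    (hN : ∀ v, N₁ v ⊆ N₁' v) : grundyVal k N₁ N₂ ≤ grundyVal k N₁' N₂ := by
  have := Fintype.ofFinite V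
  refine csSup_le_csSup ⟨Fintype.card V, ?_⟩ ⟨0, [], IsGrundySeq.nil, rfl⟩ ?_
  · rintro m ⟨S, hS, rfl⟩
    simpa using hS.1.length_le_card
  · rintro m ⟨S, hS, rfl⟩
    exact ⟨S, hS.mono_left hN, rfl⟩

namespace SimpleGraph

variable {V : Type*} (G : SimpleGraph V)

theorem subset_closedNbhd (v : V) : G.neighborSet v ⊆ closedNbhd G v :=
  Set.subset_insert v _

theorem mem_closedNbhd_comm {u w : V} : w ∈ closedNbhd G u → u ∈ closedNbhd G w := by
  rintro (rfl | h)
  exacts [Set.mem_insert _ _, Or.inr (G.adj_symm h)]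

variable [Fintype V] [DecidableRel G.Adj]

theorem ncard_neighborSet (v : V) : (G.neighborSet v).ncard = G.degree v := by
  rw [Set.ncard_eq_toFinset_card', ← card_neighborSet_eq_degree, Set.toFinset_card]

theorem ncard_closedNbhd (v : V) : (closedNbhd G v).ncard = G.degree v + 1 := by
  rw [closedNbhd, Set.ncard_insert_of_notMem G.notMem_neighborSet_self, ncard_neighborSet]

end SimpleGraph

theorem grundy_numbers_degree_bounds_general {V : Type*} [Fintype V]
    (G : SimpleGraph V) [DecidableRel G.Adj] (k : ℕ) :
    ktGrundy G k ≤ Fintype.card V - G.minDegree + k ∧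
      kZGrundy G k ≤ kGrundy G k ∧
      kGrundy G k ≤ Fintype.card V - G.minDegree + k - 1 := by
  refine ⟨grundyVal_le_of_forall fun S hS hne => ?_,
    grundyVal_mono_left G.subset_closedNbhd, grundyVal_le_of_forall fun S hS hne => ?_⟩
  · have := hS.length_add_le hne (d := G.minDegree)
      (fun u => (G.ncard_neighborSet u).symm ▸ G.minDegree_le_degree u) fun _ _ h => G.adj_symm h
    omega
  · have := hS.length_add_le hne (d := G.minDegree + 1)
      (fun u => (G.ncard_closedNbhd u).symm ▸ Nat.succ_le_succ (G.minDegree_le_degree u))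
      fun _ _ => G.mem_closedNbhd_comm
    omega

/-- `γ_gr^{t,k}(G) ≤ n - δ + k` and `γ_gr^{Z,k}(G) ≤ γ_gr^k(G) ≤ n - δ + k - 1`. -/
theorem grundy_numbers_degree_bounds {V : Type*} [Fintype V] [Nonempty V]
    (G : SimpleGraph V) [DecidableRel G.Adj] (k : ℕ) (hk : 1 ≤ k) :
    ktGrundy G k ≤ Fintype.card V - G.minDegree + k ∧
      kZGrundy G k ≤ kGrundy G k ∧
      kGrundy G k ≤ Fintype.card V - G.minDegree + k - 1 :=
  grundy_numbers_degree_bounds_general G k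
end

section
/- Let G be a finite simple graph on n vertices and let k ≥ 1. Then γ_gr^{Z,k}(G) ≥ n − F_k(G), where F_k(G) is the k-forcing number of G. -/
/-- One step of the `k`-forcing color change rule: a blue vertex with at most `k` white
neighbors colors all of its white neighbors blue. -/
def kForceStep {V : Type*} (G : SimpleGraph V) (k : ℕ) (S : Set V) : Set V :=
  S ∪ {w | ∃ b ∈ S, G.Adj b w ∧ {x | G.Adj b x ∧ x ∉ S}.ncard ≤ k}

/-- A set `B` is a `k`-forcing set if iterating the color change rule starting from `B`
eventually colors every vertex blue. -/
def IsKForcingSet {V : Type*} (G : SimpleGraph V) (k : ℕ) (B : Set V) : Prop :=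
  ∃ m : ℕ, (kForceStep G k)^[m] B = Set.univ

/-- The `k`-forcing number `F_k(G)`: the minimum size of a `k`-forcing set. -/
noncomputable def kForcingNumber {V : Type*} (G : SimpleGraph V) (k : ℕ) : ℕ :=
  sInf {m | ∃ B : Set V, IsKForcingSet G k B ∧ B.ncard = m}

/-!
List the vertices outside a minimum `k`-forcing set `B` by decreasing time at which they turn
blue. If `v` is forced by `b` from the blue set `S`, every vertex listed before `v` is still
white in `S`; since `b` is blue, such a vertex has `b` in its closed neighbourhood only as one
of the at most `k - 1` white neighbours of `b` other than `v`. So `b` is a footprint of `v`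
dominated fewer than `k` times, and the list is a `k`-Z-sequence of length `n - F_k(G)`.
-/

section

variable {V : Type*}

theorem IsGrundySeq.length_le_grundyVal [Fintype V] {k : ℕ} {N₁ N₂ : V → Set V} {S : List V}
    (hS : IsGrundySeq k N₁ N₂ S) : S.length ≤ grundyVal k N₁ N₂ :=
  le_csSup ⟨Fintype.card V, by rintro _ ⟨T, hT, rfl⟩; exact hT.1.length_le_card⟩ ⟨S, hS, rfl⟩

theorem List.exists_perm_pairwise_ge {α : Type*} (l : List α) (f : α → ℕ) :
    ∃ L : List α, L.Perm l ∧ L.Pairwise (fun a b => f b ≤ f a) := by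
  refine ⟨l.mergeSort (fun a b => decide (f b ≤ f a)), l.mergeSort_perm _, ?_⟩
  refine (List.pairwise_mergeSort (fun a b c hab hbc => ?_) (fun a b => ?_) l).imp ?_
  · simp only [decide_eq_true_eq] at hab hbc ⊢
    omega
  · simpa using Nat.le_total (f b) (f a)
  · simp

theorem List.Pairwise.rel_of_mem_take {α : Type*} {R : α → α → Prop} {L : List α}
    (hL : L.Pairwise R) {i : ℕ} (hi : i < L.length) {w : α} (hw : w ∈ L.take i) : R w L[i] :=
  hL.rel_of_mem_take_of_mem_drop hw <| by
    rw [List.drop_eq_getElem_cons hi]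
    exact List.mem_cons_self

variable {G : SimpleGraph V} {k : ℕ}

theorem exists_neighbor_ncard_lt_of_mem_kForceStep [Finite V] {S W : Set V} {v : V}
    (hv : v ∈ kForceStep G k S) (hvS : v ∉ S) (hvW : v ∉ W) (hWS : Disjoint W S) :
    ∃ u ∈ G.neighborSet v, {w | w ∈ W ∧ u ∈ closedNbhd G w}.ncard < k := by
  rcases hv with hv | ⟨b, hbS, hbv, hwhite⟩
  · exact absurd hv hvS
  refine ⟨b, hbv.symm, ?_⟩
  have hsub : {w | w ∈ W ∧ b ∈ closedNbhd G w} ⊆ {x | G.Adj b x ∧ x ∉ S} \ {v} := by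
    rintro w ⟨hwW, hbw⟩
    have hwS : w ∉ S := Set.disjoint_left.1 hWS hwW
    have hwb : G.Adj b w := by
      rcases hbw with rfl | hwb
      · exact absurd hbS hwS
      · exact hwb.symm
    exact ⟨⟨hwb, hwS⟩, fun hwv => hvW (hwv ▸ hwW)⟩
  calc {w | w ∈ W ∧ b ∈ closedNbhd G w}.ncard
      ≤ ({x | G.Adj b x ∧ x ∉ S} \ {v}).ncard := Set.ncard_le_ncard hsub
    _ < {x | G.Adj b x ∧ x ∉ S}.ncard := Set.ncard_sdiff_singleton_lt_of_mem ⟨hbv, hvS⟩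
    _ ≤ k := hwhite

theorem isGrundySeq_of_forall_exists_forced [Finite V] {L : List V} (hL : L.Nodup)
    (hforced : ∀ (i : ℕ) (hi : i < L.length),
      ∃ S, L[i] ∈ kForceStep G k S ∧ L[i] ∉ S ∧ ∀ w ∈ L.take i, w ∉ S) :
    IsGrundySeq k G.neighborSet (closedNbhd G) L := by
  refine ⟨hL, fun i hi => ?_⟩
  obtain ⟨S, hv, hvS, hW⟩ := hforced i hi
  have hvW : L[i] ∉ L.take i := fun hmem => hL.rel_of_mem_take hi hmem rfl
  simpa using exists_neighbor_ncard_lt_of_mem_kForceStep (W := {w | w ∈ L.take i})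
    hv hvS hvW (Set.disjoint_left.2 hW)

theorem exists_isGrundySeq_of_isKForcingSet [Fintype V] {B : Set V}
    (hB : IsKForcingSet G k B) :
    ∃ L : List V, IsGrundySeq k G.neighborSet (closedNbhd G) L ∧
      L.length = Fintype.card V - B.ncard := by
  classical
  obtain ⟨m, hm⟩ := hB
  obtain ⟨time, hblue, hwhite⟩ : ∃ time : V → ℕ, (∀ v, v ∈ (kForceStep G k)^[time v] B) ∧
      ∀ v j, j < time v → v ∉ (kForceStep G k)^[j] B :=
    have hblue : ∀ v, ∃ j, v ∈ (kForceStep G k)^[j] B := fun v => ⟨m, hm ▸ Set.mem_univ v⟩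
    ⟨fun v => Nat.find (hblue v), fun v => Nat.find_spec (hblue v),
      fun v _ => Nat.find_min (hblue v)⟩
  obtain ⟨L, hperm, hsorted⟩ := Bᶜ.toFinset.toList.exists_perm_pairwise_ge time
  refine ⟨L, isGrundySeq_of_forall_exists_forced
    (hperm.nodup_iff.2 (Finset.nodup_toList _)) fun i hi => ?_, ?_⟩
  · have hvB : L[i] ∉ B := by simpa using hperm.subset (L.getElem_mem hi)
    have htime : time L[i] ≠ 0 := fun h0 => hvB (by simpa [h0] using hblue L[i])
    refine ⟨(kForceStep G k)^[time L[i] - 1] B, ?_, hwhite _ _ (by omega),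
      fun w hw => hwhite _ _ ?_⟩
    · rw [← Function.iterate_succ_apply' (kForceStep G k), Nat.succ_eq_add_one,
        Nat.sub_one_add_one htime]
      exact hblue _
    · have := hsorted.rel_of_mem_take hi hw
      omega
  · rw [hperm.length_eq, Finset.length_toList, Set.toFinset_compl, Finset.card_compl,
      Set.ncard_eq_toFinset_card']

end

theorem kZGrundy_ge_card_sub_kForcingNumber_general {V : Type*} [Fintype V]
    (G : SimpleGraph V) (k : ℕ) :
    Fintype.card V - kForcingNumber G k ≤ kZGrundy G k := by
  obtain ⟨B, hB, hcard⟩ : kForcingNumber G k ∈ {m | ∃ B, IsKForcingSet G k B ∧ B.ncard = m} :=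
    Nat.sInf_mem ⟨_, Set.univ, ⟨0, rfl⟩, rfl⟩
  obtain ⟨L, hL, hlen⟩ := exists_isGrundySeq_of_isKForcingSet hB
  rw [← hcard, ← hlen]
  exact hL.length_le_grundyVal

/-- `γ_gr^{Z,k}(G) ≥ n - F_k(G)`. -/
theorem kZGrundy_ge_card_sub_kForcingNumber {V : Type*} [Fintype V]
    (G : SimpleGraph V) (k : ℕ) (hk : 1 ≤ k) :
    Fintype.card V - kForcingNumber G k ≤ kZGrundy G k :=
  kZGrundy_ge_card_sub_kForcingNumber_general G k
end

section
/- For the cycle C_n on n ≥ 3 vertices, the 2-L-Grundy domination number satisfies γ_gr^{L,2}(C_n) = n. -/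
/-!
Every vertex `v` of a graph without isolated vertices can footprint one of its neighbours `u`.
The earlier vertices having `u` in their open neighbourhood lie in `N(u) \ {v}`, so there are at
most `deg u - 1` of them. Hence, when all degrees are at most `k`, any enumeration of the vertices
is a `k`-`L`-sequence; the cycle is `2`-regular.
-/

theorem List.Nodup.get_notMem_take {α : Type*} {l : List α} (hl : l.Nodup) {i : ℕ}
    (hi : i < l.length) : l.get ⟨i, hi⟩ ∉ l.take i :=
  List.disjoint_right.mp (List.disjoint_take_drop hl le_rfl)
    (List.drop_eq_getElem_cons hi ▸ List.mem_cons_self)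

section GrundyValue

variable {V : Type*} {k : ℕ} {N₁ N₂ : V → Set V} {S : List V}

theorem IsGrundySeq.length_le_card [Fintype V] (hS : IsGrundySeq k N₁ N₂ S) :
    S.length ≤ Fintype.card V :=
  hS.1.length_le_card

theorem grundyVal_eq_card_of_isGrundySeq [Fintype V] (hS : IsGrundySeq k N₁ N₂ S)
    (hlen : S.length = Fintype.card V) : grundyVal k N₁ N₂ = Fintype.card V := by
  have hbdd : ∀ m ∈ {m | ∃ S : List V, IsGrundySeq k N₁ N₂ S ∧ S.length = m},
      m ≤ Fintype.card V := by
    rintro _ ⟨T, hT, rfl⟩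
    exact hT.length_le_card
  have hmem : Fintype.card V ∈ {m | ∃ S : List V, IsGrundySeq k N₁ N₂ S ∧ S.length = m} :=
    ⟨S, hS, hlen⟩
  exact le_antisymm (csSup_le ⟨_, hmem⟩ hbdd) (le_csSup ⟨_, hbdd⟩ hmem)

end GrundyValue

namespace SimpleGraph

variable {V : Type*} (G : SimpleGraph V) [G.LocallyFinite] {k : ℕ}

theorem isGrundySeq_closedNbhd_neighborSet_of_degree_le (hdeg : ∀ v, G.degree v ≤ k)
    (hadj : ∀ v, ∃ u, G.Adj v u) {S : List V} (hS : S.Nodup) :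
    IsGrundySeq k (closedNbhd G) G.neighborSet S := by
  refine ⟨hS, fun i hi => ?_⟩
  set v := S.get ⟨i, hi⟩
  obtain ⟨u, hvu⟩ := hadj v
  refine ⟨u, Set.mem_insert_of_mem _ hvu, ?_⟩
  have hv : v ∉ S.take i := hS.get_notMem_take hi
  have huv : v ∈ G.neighborSet u := hvu.symm
  have hsub : {w | w ∈ S.take i ∧ u ∈ G.neighborSet w} ⊆ G.neighborSet u \ {v} :=
    fun w ⟨hw, hwu⟩ => ⟨G.adj_symm hwu, fun h => hv (h ▸ hw)⟩
  have hpos : 0 < G.degree u := (G.degree_pos_iff_exists_adj u).mpr ⟨v, huv⟩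
  calc {w | w ∈ S.take i ∧ u ∈ G.neighborSet w}.ncard
      ≤ (G.neighborSet u \ {v}).ncard := Set.ncard_le_ncard hsub (Set.toFinite _)
    _ = G.degree u - 1 := by
      rw [Set.ncard_sdiff_singleton_of_mem huv, Set.ncard_eq_toFinset_card', Set.toFinset_card,
        card_neighborSet_eq_degree]
    _ < k := by have := hdeg u; omega

theorem kLGrundy_eq_card_of_degree_le [Fintype V] (hdeg : ∀ v, G.degree v ≤ k)
    (hadj : ∀ v, ∃ u, G.Adj v u) : kLGrundy G k = Fintype.card V :=
  grundyVal_eq_card_of_isGrundySeq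
    (G.isGrundySeq_closedNbhd_neighborSet_of_degree_le hdeg hadj Finset.univ.nodup_toList)
    (Finset.length_toList _)

end SimpleGraph

/-- For `n ≥ 3`, `γ_gr^{L,2}(C_n) = n`. -/
theorem kLGrundy_cycleGraph (n : ℕ) (hn : 3 ≤ n) :
    kLGrundy (SimpleGraph.cycleGraph n) 2 = n := by
  obtain ⟨m, rfl⟩ := Nat.exists_eq_add_of_le' hn
  rw [SimpleGraph.kLGrundy_eq_card_of_degree_le _
    (fun _ => SimpleGraph.cycleGraph_degree_three_le.le)
    (fun v => ⟨v + 1, by simp [SimpleGraph.cycleGraph_adj]⟩), Fintype.card_fin]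
end

section
/- For the cycle C_n on n ≥ 3 vertices, the 2-t-Grundy domination number satisfies γ_gr^{t,2}(C_n) = n. -/
open SimpleGraph

variable {V : Type*}

theorem IsGrundySeq.grundyVal_eq_card [Fintype V] {k : ℕ} {N₁ N₂ : V → Set V} {S : List V}
    (hS : IsGrundySeq k N₁ N₂ S) (hlen : S.length = Fintype.card V) :
    grundyVal k N₁ N₂ = Fintype.card V := by
  have hbdd : ∀ m ∈ {m | ∃ T : List V, IsGrundySeq k N₁ N₂ T ∧ T.length = m},
      m ≤ Fintype.card V := by
    rintro _ ⟨T, hT, rfl⟩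
    exact hT.1.length_le_card
  exact le_antisymm (csSup_le ⟨_, S, hS, rfl⟩ hbdd) (le_csSup ⟨_, hbdd⟩ ⟨S, hS, hlen⟩)

theorem List.Nodup.getElem_notMem_take {S : List V} (hS : S.Nodup) {i : ℕ} (hi : i < S.length) :
    S[i] ∉ S.take i := fun hmem =>
  List.disjoint_take_drop hS le_rfl hmem (by rw [List.drop_eq_getElem_cons hi]; exact .head _)

theorem SimpleGraph.ncard_neighborSet_eq_degree (G : SimpleGraph V) [G.LocallyFinite] (v : V) :
    (G.neighborSet v).ncard = G.degree v := by
  rw [Set.ncard_eq_toFinset_card', ← card_neighborSet_eq_degree, Set.toFinset_card]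

theorem SimpleGraph.isGrundySeq_neighborSet_of_degree_le (G : SimpleGraph V) [G.LocallyFinite]
    {k : ℕ} (hdeg : ∀ v, G.degree v ≤ k) (hpos : ∀ v, 0 < G.degree v) {S : List V}
    (hS : S.Nodup) : IsGrundySeq k G.neighborSet G.neighborSet S := by
  refine ⟨hS, fun i hi => ?_⟩
  obtain ⟨u, hu⟩ := (G.degree_pos_iff_exists_adj S[i]).1 (hpos S[i])
  have hsub : {w | w ∈ S.take i ∧ u ∈ G.neighborSet w} ⊂ G.neighborSet u :=
    ⟨fun w hw => G.adj_symm hw.2, fun h => hS.getElem_notMem_take hi (h hu.symm).1⟩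
  refine ⟨u, hu, ?_⟩
  calc _ < (G.neighborSet u).ncard := Set.ncard_lt_ncard hsub
    _ = G.degree u := G.ncard_neighborSet_eq_degree u
    _ ≤ k := hdeg u

theorem SimpleGraph.ktGrundy_eq_card_of_degree_le [Fintype V] (G : SimpleGraph V)
    [G.LocallyFinite] {k : ℕ} (hdeg : ∀ v, G.degree v ≤ k) (hpos : ∀ v, 0 < G.degree v) :
    ktGrundy G k = Fintype.card V :=
  (G.isGrundySeq_neighborSet_of_degree_le hdeg hpos Finset.univ.nodup_toList).grundyVal_eq_card
    (Finset.length_toList _)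

/-- For `n ≥ 3`, `γ_gr^{t,2}(C_n) = n`. -/
theorem ktGrundy_cycleGraph (n : ℕ) (hn : 3 ≤ n) :
    ktGrundy (SimpleGraph.cycleGraph n) 2 = n := by
  obtain ⟨m, rfl⟩ : ∃ m, n = m + 3 := ⟨n - 3, by omega⟩
  have hdeg (v : Fin (m + 3)) : (cycleGraph (m + 3)).degree v = 2 := cycleGraph_degree_three_le
  rw [ktGrundy_eq_card_of_degree_le _ (fun v => (hdeg v).le) (fun v => by simp [hdeg]),
    Fintype.card_fin]
end

section
/- For the complete graph K_n and any integer k with 1 ≤ k ≤ n − 1, the k-t-Grundy domination number satisfies γ_gr^{t,k}(K_n) = k + 1. -/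
namespace SimpleGraph

variable {V : Type*}

lemma ncard_mem_and_mem_top_neighborSet [DecidableEq V] (l : List V) (u : V) :
    {w | w ∈ l ∧ u ∈ (⊤ : SimpleGraph V).neighborSet w}.ncard = (l.toFinset.erase u).card := by
  rw [← Set.ncard_coe_finset]
  congr 1
  ext w
  simp [and_comm, eq_comm]

lemma length_le_of_isGrundySeq_top {k : ℕ} {N₁ : V → Set V} {S : List V}
    (hS : IsGrundySeq k N₁ (⊤ : SimpleGraph V).neighborSet S) : S.length ≤ k + 1 := by
  classical
  by_contra! hlong
  obtain ⟨u, -, hcount⟩ := hS.2 (k + 1) hlong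
  rw [ncard_mem_and_mem_top_neighborSet] at hcount
  have hprefix : (S.take (k + 1)).toFinset.card = k + 1 := by
    rw [List.toFinset_card_of_nodup (hS.1.sublist (List.take_sublist _ _)), List.length_take]
    omega
  have := Finset.pred_card_le_card_erase (s := (S.take (k + 1)).toFinset) (a := u)
  omega

lemma isGrundySeq_top_of_length_le {k : ℕ} {S : List V} (hk : 1 ≤ k) (hS : S.Nodup)
    (htwo : 2 ≤ S.length) (hlen : S.length ≤ k + 1) :
    IsGrundySeq k (⊤ : SimpleGraph V).neighborSet (⊤ : SimpleGraph V).neighborSet S := by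
  classical
  refine ⟨hS, fun i hi => ?_⟩
  have hne {a b : ℕ} (ha : a < S.length) (hb : b < S.length) (hab : a ≠ b) : S[a] ≠ S[b] :=
    fun h => hab (hS.getElem_inj_iff.mp h)
  cases i with
  | zero =>
    refine ⟨S[1], (top_adj _ _).mpr (hne hi (by omega) zero_ne_one), ?_⟩
    simpa only [List.take_zero, List.not_mem_nil, false_and, Set.ofPred_false, Set.ncard_empty]
  | succ j =>
    refine ⟨S[0], (top_adj _ _).mpr (hne hi (by omega) (Nat.succ_ne_zero j)), ?_⟩
    have hfirst : S[0] ∈ (S.take (j + 1)).toFinset := by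
      simpa using List.mem_take_iff_getElem.mpr ⟨0, by omega, rfl⟩
    rw [ncard_mem_and_mem_top_neighborSet, Finset.card_erase_of_mem hfirst,
      List.toFinset_card_of_nodup (hS.sublist (List.take_sublist _ _)), List.length_take]
    omega

end SimpleGraph

lemma grundyVal_eq_of_isGrundySeq {V : Type*} {k m : ℕ} {N₁ N₂ : V → Set V} {S : List V}
    (hS : IsGrundySeq k N₁ N₂ S) (hlen : S.length = m)
    (hmax : ∀ T, IsGrundySeq k N₁ N₂ T → T.length ≤ m) : grundyVal k N₁ N₂ = m :=
  IsGreatest.csSup_eq ⟨⟨S, hS, hlen⟩, by rintro _ ⟨T, hT, rfl⟩; exact hmax T hT⟩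

/-- For `1 ≤ k ≤ n - 1`, `γ_gr^{t,k}(K_n) = k + 1`. -/
theorem ktGrundy_completeGraph (n k : ℕ) (hk : 1 ≤ k) (hkn : k ≤ n - 1) :
    ktGrundy (⊤ : SimpleGraph (Fin n)) k = k + 1 := by
  have hlen : ((List.finRange n).take (k + 1)).length = k + 1 := by
    rw [List.length_take, List.length_finRange]; omega
  exact grundyVal_eq_of_isGrundySeq
    (SimpleGraph.isGrundySeq_top_of_length_le hk
      ((List.nodup_finRange n).sublist (List.take_sublist _ _)) (by omega) hlen.le)
    hlen (fun _ => SimpleGraph.length_le_of_isGrundySeq_top)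
end

section
/- Let K_{m,n} be the complete bipartite graph with parts of sizes m and n, where m ≥ n ≥ k ≥ 1. Then the k-Z-Grundy domination number satisfies γ_gr^{Z,k}(K_{m,n}) = 2k if m > k and n ≥ k, and γ_gr^{Z,k}(K_{m,n}) = 2k − 1 if m = n = k. -/
/-! A vertex on one side of `K_{m,n}` can only footprint a vertex `u` on the other side, and `u`
lies in the closed neighbourhood of every earlier vertex on the first side; hence each side
contributes at most `k` vertices to a `k`-Z-sequence. When `m = n = k`, a sequence of length `2k`
would end with a vertex whose footprint `u` already occurs in the sequence, so `u` itself and the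
`k - 1` earlier vertices on the side of the last vertex dominate `u` `k` times. Conversely, if
`m > k`, then `k` vertices of `M` followed by `k` vertices of `N` form a sequence, each vertex of
`N` footprinting a vertex of `M` outside the sequence; if `m = k`, the footprint has to be the
first vertex, and only `k - 1` vertices of `N` fit. -/

theorem List.ncard_le_length_of_subset {V : Type*} (l : List V) {s : Set V}
    (h : s ⊆ {w | w ∈ l}) : s.ncard ≤ l.length := by
  classical
  calc s.ncard ≤ (l.toFinset : Set V).ncard :=
        Set.ncard_le_ncard (by simpa using h) l.toFinset.finite_toSet
    _ ≤ l.length := by rw [Set.ncard_coe_finset]; exact l.toFinset_card_le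

theorem List.Nodup.ncard_setOf_mem_and {V : Type*} {l : List V} (hl : l.Nodup) (P : V → Prop)
    [DecidablePred P] : {w | w ∈ l ∧ P w}.ncard = l.countP (P ·) := by
  classical
  have : {w | w ∈ l ∧ P w} = ((l.filter (P ·)).toFinset : Set V) := by ext; simp
  rw [this, Set.ncard_coe_finset, List.toFinset_card_of_nodup (hl.filter _),
    List.countP_eq_length_filter]

theorem List.Nodup.mem_of_card_le_length {V : Type*} [Fintype V] {l : List V} (hl : l.Nodup)
    (hcard : Fintype.card V ≤ l.length) (v : V) : v ∈ l := by
  classical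
  have huniv : l.toFinset = Finset.univ := Finset.eq_univ_of_card _
    (le_antisymm (Finset.card_le_univ _) (by rwa [List.toFinset_card_of_nodup hl]))
  rw [← List.mem_toFinset, huniv]
  exact Finset.mem_univ v

section Grundy

variable {V : Type*} {k : ℕ} {N₁ N₂ : V → Set V}

theorem isGrundySeq_nil : IsGrundySeq k N₁ N₂ [] :=
  ⟨List.nodup_nil, fun _ hi => absurd hi (Nat.not_lt_zero _)⟩

theorem isGrundySeq_append_singleton {S : List V} {x : V} :
    IsGrundySeq k N₁ N₂ (S ++ [x]) ↔
      IsGrundySeq k N₁ N₂ S ∧ x ∉ S ∧ ∃ u ∈ N₁ x, {w | w ∈ S ∧ u ∈ N₂ w}.ncard < k := by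
  have hnodup : (S ++ [x]).Nodup ↔ S.Nodup ∧ x ∉ S := by
    rw [← List.concat_eq_append, List.nodup_concat, and_comm]
  have hlen : (S ++ [x]).length = S.length + 1 := by simp
  have hpre : ∀ i (hi : i < S.length), (S ++ [x]).take i = S.take i ∧
      (S ++ [x]).get ⟨i, by omega⟩ = S.get ⟨i, hi⟩ := fun i hi =>
    ⟨List.take_append_of_le_length hi.le, List.getElem_append_left hi⟩
  have hlast : (S ++ [x]).take S.length = S ∧ (S ++ [x]).get ⟨S.length, by omega⟩ = x :=
    ⟨by simp, List.getElem_concat_length rfl _⟩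
  simp only [IsGrundySeq, hnodup]
  constructor
  · rintro ⟨⟨hS, hx⟩, h⟩
    refine ⟨⟨hS, fun i hi => ?_⟩, hx, ?_⟩
    · simpa only [hpre i hi] using h i (by omega)
    · simpa only [hlast] using h S.length (by omega)
  · rintro ⟨⟨hS, h⟩, hx, hu⟩
    refine ⟨⟨hS, hx⟩, fun i hi => ?_⟩
    obtain hi' | rfl : i < S.length ∨ i = S.length := by omega
    · simpa only [hpre i hi'] using h i hi'
    · simpa only [hlast] using hu

theorem grundyVal_eq {n : ℕ} (hle : ∀ S, IsGrundySeq k N₁ N₂ S → S.length ≤ n)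
    (hex : ∃ S, IsGrundySeq k N₁ N₂ S ∧ S.length = n) : grundyVal k N₁ N₂ = n :=
  IsGreatest.csSup_eq ⟨hex, by rintro _ ⟨S, hS, rfl⟩; exact hle S hS⟩

theorem isGrundySeq_of_length_le {S : List V} (hS : S.Nodup) (hlen : S.length ≤ k)
    (hN : ∀ v ∈ S, (N₁ v).Nonempty) : IsGrundySeq k N₁ N₂ S := by
  induction S using List.reverseRecOn with
  | nil => exact isGrundySeq_nil
  | append_singleton S x ih =>
    rw [← List.concat_eq_append, List.nodup_concat] at hS
    rw [List.length_append, List.length_singleton] at hlen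
    obtain ⟨u, hu⟩ := hN x (by simp)
    refine isGrundySeq_append_singleton.2 ⟨ih hS.2 (by omega) fun v hv => hN v (by simp [hv]),
      hS.1, u, hu, ?_⟩
    exact (S.ncard_le_length_of_subset fun _ hw => hw.1).trans_lt (by omega)

theorem IsGrundySeq.countP_lt_of_append_singleton {S : List V} {x : V} {p : V → Bool}
    (hp : ∀ v w, p v → p w → N₁ v ⊆ N₂ w) (hS : IsGrundySeq k N₁ N₂ (S ++ [x])) (hx : p x) :
    S.countP p < k := by
  obtain ⟨hS', -, u, hu, hcard⟩ := isGrundySeq_append_singleton.1 hS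
  calc S.countP p = {w | w ∈ S ∧ p w}.ncard := by
        simpa using (hS'.1.ncard_setOf_mem_and (p ·)).symm
    _ ≤ {w | w ∈ S ∧ u ∈ N₂ w}.ncard :=
        Set.ncard_le_ncard (fun w hw => ⟨hw.1, hp x w hx hw.2 hu⟩)
          (S.finite_toSet.subset fun _ hw => hw.1)
    _ < k := hcard

theorem IsGrundySeq.countP_le {S : List V} {p : V → Bool}
    (hp : ∀ v w, p v → p w → N₁ v ⊆ N₂ w) (hS : IsGrundySeq k N₁ N₂ S) : S.countP p ≤ k := by
  induction S using List.reverseRecOn with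
  | nil => simp
  | append_singleton S x ih =>
    rw [List.countP_append]
    by_cases hx : p x
    · have := hS.countP_lt_of_append_singleton hp hx
      simp [hx]; omega
    · simpa [hx] using ih (isGrundySeq_append_singleton.1 hS).1

end Grundy

section CompleteBipartite

variable {V : Type*} {G : SimpleGraph V} {c : V → Bool} {k : ℕ}

theorem mem_closedNbhd_iff_of_adj_iff (hG : ∀ v w, G.Adj v w ↔ c v ≠ c w) {u w : V} :
    u ∈ closedNbhd G w ↔ u = w ∨ c u ≠ c w := by
  rw [closedNbhd, Set.mem_insert_iff, SimpleGraph.mem_neighborSet, hG, ne_comm]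

theorem neighborSet_subset_closedNbhd_of_adj_iff (hG : ∀ v w, G.Adj v w ↔ c v ≠ c w) {v w : V}
    (hvw : c v = c w) : G.neighborSet v ⊆ closedNbhd G w := fun u hu => by
  rw [mem_closedNbhd_iff_of_adj_iff hG, ← hvw]
  exact Or.inr ((hG v u).1 hu).symm

theorem IsGrundySeq.length_le_two_mul_of_adj_iff (hG : ∀ v w, G.Adj v w ↔ c v ≠ c w)
    {S : List V} (hS : IsGrundySeq k G.neighborSet (closedNbhd G) S) : S.length ≤ 2 * k := by
  have htrue := hS.countP_le (p := c) fun v w hv hw =>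
    neighborSet_subset_closedNbhd_of_adj_iff hG (hv.trans hw.symm)
  have hfalse := hS.countP_le (p := fun v => c v = false) fun v w hv hw =>
    neighborSet_subset_closedNbhd_of_adj_iff hG (by simp_all)
  have := List.length_eq_countP_add_countP c (l := S)
  simp only [Bool.not_eq_true] at this
  omega

theorem IsGrundySeq.length_le_two_mul_sub_one_of_adj_iff [Fintype V]
    (hG : ∀ v w, G.Adj v w ↔ c v ≠ c w) (hV : Fintype.card V ≤ 2 * k) {S : List V}
    (hS : IsGrundySeq k G.neighborSet (closedNbhd G) S) : S.length ≤ 2 * k - 1 := by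
  rcases S.eq_nil_or_concat with rfl | ⟨T, x, rfl⟩
  · simp
  rw [List.concat_eq_append] at hS ⊢
  by_contra! hlong
  rw [List.length_append, List.length_singleton] at hlong
  obtain ⟨hT, -, u, hux, hcard⟩ := isGrundySeq_append_singleton.1 hS
  have hu : u ∈ T := by
    have := hS.1.mem_of_card_le_length (by simp; omega) u
    rw [List.mem_append, List.mem_singleton] at this
    exact this.resolve_right (G.ne_of_adj hux).symm
  have hother : T.countP (fun v => ¬c v = c x) ≤ k := hT.countP_le fun v w hv hw =>
    neighborSet_subset_closedNbhd_of_adj_iff hG (by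
      revert hv hw; cases c v <;> cases c w <;> cases c x <;> simp)
  have hsplit := List.length_eq_countP_add_countP (fun v => c v = c x) (l := T)
  simp only [decide_eq_true_eq] at hsplit
  have hins : insert u {w | w ∈ T ∧ c w = c x} ⊆ {w | w ∈ T ∧ u ∈ closedNbhd G w} := by
    rintro w (rfl | ⟨hwT, hw⟩)
    · exact ⟨hu, Set.mem_insert _ _⟩
    · exact ⟨hwT, neighborSet_subset_closedNbhd_of_adj_iff hG hw.symm hux⟩
  have hu_notMem : u ∉ {w | w ∈ T ∧ c w = c x} := fun h => (hG x u).1 hux h.2.symm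
  have := Set.ncard_le_ncard hins (T.finite_toSet.subset fun _ hw => hw.1)
  rw [Set.ncard_insert_of_notMem hu_notMem (T.finite_toSet.subset fun _ hw => hw.1),
    hT.1.ncard_setOf_mem_and] at this
  omega

theorem isGrundySeq_append_of_adj_iff (hG : ∀ v w, G.Adj v w ↔ c v ≠ c w) {L R : List V}
    {b : Bool} (hL : L.Nodup) (hR : R.Nodup) (hLc : ∀ v ∈ L, c v = b) (hRc : ∀ v ∈ R, c v ≠ b)
    (hLk : L.length ≤ k) (hRk : R.length ≤ k) {a y : V} (ha : c a = b) (hy : c y ≠ b)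
    (haL : a ∉ L ∨ R.length < k) :
    IsGrundySeq k G.neighborSet (closedNbhd G) (L ++ R) := by
  induction R using List.reverseRecOn with
  | nil =>
    rw [List.append_nil]
    refine isGrundySeq_of_length_le hL hLk fun v hv => ⟨y, (hG v y).2 ?_⟩
    rw [hLc v hv]; exact hy.symm
  | append_singleton R x ih =>
    rw [← List.concat_eq_append, List.nodup_concat] at hR
    rw [List.length_append, List.length_singleton] at hRk haL
    have hxL : x ∉ L := fun hx => hRc x (by simp) (hLc x hx)
    have hxR : c x ≠ c a := ha ▸ hRc x (by simp)
    have hLa : ∀ w ∈ L, a ∈ closedNbhd G w → w = a := fun w hw haw =>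
      (((mem_closedNbhd_iff_of_adj_iff hG).1 haw).resolve_right (by simp [ha, hLc w hw])).symm
    rw [← List.append_assoc, isGrundySeq_append_singleton]
    refine ⟨ih hR.2 (fun v hv => hRc v (by simp [hv])) (by omega) (by omega), ?_, a,
      (hG x a).2 hxR, ?_⟩
    · simp [hxL, hR.1]
    · rcases haL with haL | hRk'
      · refine (R.ncard_le_length_of_subset fun w hw => ?_).trans_lt (by omega)
        exact (List.mem_append.1 hw.1).resolve_left fun hwL => haL (hLa w hwL hw.2 ▸ hwL)
      · refine ((a :: R).ncard_le_length_of_subset fun w hw => ?_).trans_lt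
          (by simpa using hRk')
        rcases List.mem_append.1 hw.1 with hwL | hwR
        · exact hLa w hwL hw.2 ▸ List.mem_cons_self
        · exact List.mem_cons_of_mem a hwR

end CompleteBipartite

theorem completeBipartiteGraph_adj_iff_isLeft_ne {α β : Type*} (v w : α ⊕ β) :
    (completeBipartiteGraph α β).Adj v w ↔ v.isLeft ≠ w.isLeft := by
  cases v <;> cases w <;> simp

theorem exists_isGrundySeq_completeBipartiteGraph_fin {m n k r : ℕ} (hkm : k ≤ m) (hrn : r ≤ n)
    (hrk : r ≤ k) (a : Fin m) (y : Fin n) (ha : k ≤ a ∨ r < k) :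
    ∃ S, IsGrundySeq k (completeBipartiteGraph (Fin m) (Fin n)).neighborSet
      (closedNbhd (completeBipartiteGraph (Fin m) (Fin n))) S ∧ S.length = k + r := by
  refine ⟨(List.finRange k).map (Sum.inl ∘ Fin.castLE hkm) ++
      (List.finRange r).map (Sum.inr ∘ Fin.castLE hrn),
    isGrundySeq_append_of_adj_iff completeBipartiteGraph_adj_iff_isLeft_ne (b := true)
      ((List.nodup_finRange k).map (Sum.inl_injective.comp (Fin.castLE_injective hkm)))
      ((List.nodup_finRange r).map (Sum.inr_injective.comp (Fin.castLE_injective hrn)))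
      (by simp) (by simp) (by simp) (by simp [hrk]) (a := Sum.inl a) (y := Sum.inr y) rfl
      (by simp) (ha.imp (fun h => by simp [Fin.ext_iff]; omega) (by simp)), by simp⟩

theorem kZGrundy_completeBipartiteGraph_general (m n k : ℕ) (hk : 1 ≤ k) (hkn : k ≤ n) :
    (k < m → kZGrundy (completeBipartiteGraph (Fin m) (Fin n)) k = 2 * k) ∧
      (m = k ∧ n = k → kZGrundy (completeBipartiteGraph (Fin m) (Fin n)) k = 2 * k - 1) := by
  have hG := completeBipartiteGraph_adj_iff_isLeft_ne (α := Fin m) (β := Fin n)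
  let y : Fin n := ⟨0, by omega⟩
  refine ⟨fun hkm => grundyVal_eq (fun S hS => hS.length_le_two_mul_of_adj_iff hG) ?_,
    fun ⟨hm, hn⟩ => grundyVal_eq (fun S hS => hS.length_le_two_mul_sub_one_of_adj_iff hG
      (by simp; omega)) ?_⟩
  · obtain ⟨S, hS, hlen⟩ :=
      exists_isGrundySeq_completeBipartiteGraph_fin hkm.le hkn le_rfl ⟨k, hkm⟩ y (Or.inl le_rfl)
    exact ⟨S, hS, by omega⟩
  · obtain ⟨S, hS, hlen⟩ := exists_isGrundySeq_completeBipartiteGraph_fin (r := k - 1)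
      hm.ge (by omega) (by omega) ⟨0, by omega⟩ y (Or.inr (by omega))
    exact ⟨S, hS, by omega⟩

/-- For `m ≥ n ≥ k ≥ 1`, `γ_gr^{Z,k}(K_{m,n}) = 2k` if `m > k`, and
`γ_gr^{Z,k}(K_{m,n}) = 2k - 1` if `m = n = k`. -/
theorem kZGrundy_completeBipartiteGraph (m n k : ℕ) (hk : 1 ≤ k) (hkn : k ≤ n) (hnm : n ≤ m) :
    (k < m → kZGrundy (completeBipartiteGraph (Fin m) (Fin n)) k = 2 * k) ∧
      (m = k ∧ n = k → kZGrundy (completeBipartiteGraph (Fin m) (Fin n)) k = 2 * k - 1) :=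
  kZGrundy_completeBipartiteGraph_general m n k hk hkn
end
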